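/- Let p be a prime number, g ≥ 1, and let a_0, …, a_{g−1} be integers with p not dividing a_0 and |a_{g−1}·p| > 2g. Set q(x) = x^g + a_{g−1}p·x^{g−1} + … + a_1p·x + a_0p. Then: (i) sym(q) is symplectically irreducible; (ii) sym(q) has a complex root that is not a root of unity; and (iii) sym(q) is not a polynomial in x^k for any integer k > 1. -/

import Mathlib

open Polynomial

/-- For a polynomial `q = a_g x^g + … + a_0` of degree `g`,
`sym(q) = ∑ a_i x^{g-i} (x²+1)^i`, i.e. `sym(q)(x) = x^g · q(x + 1/x)`. -/
noncomputable def symPoly (q : Polynomial ℤ) : Polynomial ℤ :=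
  ∑ i ∈ Finset.range (q.natDegree + 1),
    Polynomial.C (q.coeff i) * Polynomial.X ^ (q.natDegree - i) * (Polynomial.X ^ 2 + 1) ^ i

/-- A polynomial is symplectic if it is monic of even degree `2n` (`n ≥ 1`) and palindromic. -/
def IsSymplecticPoly (p : Polynomial ℤ) : Prop :=
  p.Monic ∧ (∃ n : ℕ, 1 ≤ n ∧ p.natDegree = 2 * n) ∧
    ∀ i ≤ p.natDegree, p.coeff i = p.coeff (p.natDegree - i)

/-- A symplectic polynomial is symplectically irreducible if it is not the
product of two symplectic polynomials. -/
def SymplecticallyIrreducible (p : Polynomial ℤ) : Prop :=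
  IsSymplecticPoly p ∧
    ¬ ∃ p₁ p₂ : Polynomial ℤ, IsSymplecticPoly p₁ ∧ IsSymplecticPoly p₂ ∧ p = p₁ * p₂

/-!
For `z ≠ 0` one has `sym(q)(z) = z^g q(z + 1/z)`, and `z ↦ z + 1/z` maps `ℂ \ {0}` onto `ℂ`.
Hence `sym` is multiplicative and injective on `ℤ[x]`, and every palindromic polynomial of
degree `2n` is `sym` of a polynomial of degree `n` (peel off multiples of `(x² + 1)^n`). A
factorisation of `sym(q)` into symplectic polynomials therefore comes from a factorisation of
`q`, which is impossible since `q` is Eisenstein at `p`.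

The roots of `q` sum to `-a_{g-1} p`, so `q` has a root `β` with `|β| > 2`; a solution of
`z + 1/z = β` is a root of `sym(q)` off the unit circle. Finally `sym(q)` has the nonzero
coefficients `1` at `x^{2g}` and `a_{g-1} p` at `x^{2g-1}`, so it is no polynomial in `x^k`
for `k > 1`.
-/

namespace Polynomial

variable {R : Type*}

section Semiring

variable [Semiring R]

theorem reflect_eq_self_iff {N : ℕ} {P : R[X]} :
    reflect N P = P ↔ ∀ i ≤ N, P.coeff i = P.coeff (N - i) := by
  refine ⟨fun h i hi => ?_, fun h => ?_⟩
  · rw [← h, coeff_reflect, revAt_le hi, h]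
  · ext i
    rw [coeff_reflect]
    by_cases hi : i ≤ N
    · rw [revAt_le hi, h i hi]
    · rw [revAt_eq_self_of_lt (not_le.mp hi)]

theorem reflect_two_X : reflect 2 (X : R[X]) = X := by
  simpa using reflect_monomial (R := R) 2 1

end Semiring

variable [CommRing R]

theorem coeff_X_sq_add_one_pow (j i : ℕ) :
    ((X ^ 2 + 1 : R[X]) ^ j).coeff i = if 2 ∣ i then (j.choose (i / 2) : R) else 0 := by
  have : (X ^ 2 + 1 : R[X]) ^ j = expand R 2 ((X + 1) ^ j) := by simp
  rw [this, coeff_expand two_pos, coeff_X_add_one_pow]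

theorem natDegree_X_sq_add_one_pow_le (j : ℕ) : ((X ^ 2 + 1 : R[X]) ^ j).natDegree ≤ 2 * j := by
  refine natDegree_le_iff_coeff_eq_zero.mpr fun i hi => ?_
  rw [coeff_X_sq_add_one_pow]
  split_ifs with h
  · rw [Nat.choose_eq_zero_of_lt (by omega), Nat.cast_zero]
  · rfl

theorem reflect_X_sq_add_one_pow (j : ℕ) :
    reflect (2 * j) ((X ^ 2 + 1 : R[X]) ^ j) = (X ^ 2 + 1) ^ j := by
  refine reflect_eq_self_iff.mpr fun i hi => ?_
  simp only [coeff_X_sq_add_one_pow]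
  by_cases h : 2 ∣ i
  · obtain ⟨k, rfl⟩ := h
    rw [if_pos ⟨k, rfl⟩, if_pos ⟨j - k, by omega⟩, show (2 * j - 2 * k) / 2 = j - k by omega,
      Nat.mul_div_cancel_left k two_pos, Nat.choose_symm (by omega)]
  · rw [if_neg h, if_neg fun ⟨k, hk⟩ => h ⟨j - k, by omega⟩]

/-- `X^m · r(X + 1/X)` when `deg r ≤ m`; only the coefficients `r_0, …, r_m` enter. -/
noncomputable def symOfDeg (m : ℕ) (r : R[X]) : R[X] :=
  ∑ j ∈ Finset.range (m + 1), C (r.coeff j) * X ^ (m - j) * (X ^ 2 + 1) ^ j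

theorem symOfDeg_zero (r : R[X]) : symOfDeg 0 r = C (r.coeff 0) := by
  simp [symOfDeg]

theorem symOfDeg_succ (m : ℕ) (r : R[X]) :
    symOfDeg (m + 1) r = X * symOfDeg m r + C (r.coeff (m + 1)) * (X ^ 2 + 1) ^ (m + 1) := by
  rw [symOfDeg, Finset.sum_range_succ, Nat.sub_self, pow_zero, mul_one, symOfDeg, Finset.mul_sum]
  congr 1
  refine Finset.sum_congr rfl fun j hj => ?_
  rw [Nat.sub_add_comm (Nat.lt_succ_iff.mp (Finset.mem_range.mp hj)), pow_succ]
  ring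

theorem symOfDeg_congr {m : ℕ} {r s : R[X]} (h : ∀ j ≤ m, r.coeff j = s.coeff j) :
    symOfDeg m r = symOfDeg m s :=
  Finset.sum_congr rfl fun j hj => by rw [h j (Nat.lt_succ_iff.mp (Finset.mem_range.mp hj))]

theorem natDegree_symOfDeg_le (m : ℕ) (r : R[X]) : (symOfDeg m r).natDegree ≤ 2 * m := by
  induction m with
  | zero => simp [symOfDeg_zero]
  | succ m ih =>
    rw [symOfDeg_succ]
    refine natDegree_add_le_of_degree_le ?_ ?_
    · exact natDegree_mul_le.trans (by have := natDegree_X_le (R := R); omega)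
    · exact natDegree_C_mul_le _ _ |>.trans (natDegree_X_sq_add_one_pow_le _)

theorem coeff_symOfDeg_two_mul (m : ℕ) (r : R[X]) : (symOfDeg m r).coeff (2 * m) = r.coeff m := by
  cases m with
  | zero => simp [symOfDeg_zero]
  | succ m =>
    rw [symOfDeg_succ, coeff_add, show 2 * (m + 1) = 2 * m + 1 + 1 by ring, coeff_X_mul,
      coeff_eq_zero_of_natDegree_lt ((natDegree_symOfDeg_le m r).trans_lt (by omega)),
      coeff_C_mul, coeff_X_sq_add_one_pow, if_pos ⟨m + 1, by ring⟩,
      show (2 * m + 1 + 1) / 2 = m + 1 by omega, Nat.choose_self, Nat.cast_one, mul_one, zero_add]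

theorem coeff_symOfDeg_two_mul_add_one (m : ℕ) (r : R[X]) :
    (symOfDeg (m + 1) r).coeff (2 * m + 1) = r.coeff m := by
  rw [symOfDeg_succ, coeff_add, coeff_X_mul, coeff_symOfDeg_two_mul, coeff_C_mul,
    coeff_X_sq_add_one_pow, if_neg (by omega), mul_zero, add_zero]

theorem reflect_symOfDeg (m : ℕ) (r : R[X]) : reflect (2 * m) (symOfDeg m r) = symOfDeg m r := by
  induction m with
  | zero => simp [symOfDeg_zero, reflect_C]
  | succ m ih =>
    rw [symOfDeg_succ, reflect_add, reflect_C_mul, reflect_X_sq_add_one_pow,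
      show 2 * (m + 1) = 2 + 2 * m by ring,
      reflect_mul _ _ (natDegree_X_le.trans one_le_two) (natDegree_symOfDeg_le m r), ih,
      reflect_two_X]

theorem exists_symOfDeg_eq {m : ℕ} {P : R[X]} (hdeg : P.natDegree ≤ 2 * m)
    (hpal : reflect (2 * m) P = P) : ∃ r : R[X], r.natDegree ≤ m ∧ symOfDeg m r = P := by
  induction m generalizing P with
  | zero =>
    refine ⟨C (P.coeff 0), by simp, ?_⟩
    rw [symOfDeg_zero, coeff_C_zero, ← eq_C_of_natDegree_le_zero hdeg]
  | succ m ih =>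
    -- Peel off `c (X²+1)^(m+1)`; what is left vanishes at `0` and is `X` times a palindrome.
    set c := P.coeff (2 * (m + 1))
    set P' := P - C c * (X ^ 2 + 1) ^ (m + 1) with hP'
    have hP'coeff : ∀ i, P'.coeff i = P.coeff i - c * ((X ^ 2 + 1 : R[X]) ^ (m + 1)).coeff i :=
      fun i => by rw [coeff_sub, coeff_C_mul]
    have hP'pal : reflect (2 * (m + 1)) P' = P' := by
      rw [reflect_sub, reflect_C_mul, hpal, reflect_X_sq_add_one_pow]
    have hP'deg : P'.natDegree ≤ 2 * m + 1 := by
      refine natDegree_le_iff_coeff_eq_zero.mpr fun i hi => ?_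
      obtain rfl | hi : i = 2 * (m + 1) ∨ 2 * (m + 1) < i := by omega
      · rw [hP'coeff, coeff_X_sq_add_one_pow, if_pos ⟨m + 1, rfl⟩,
          Nat.mul_div_cancel_left _ two_pos, Nat.choose_self, Nat.cast_one, mul_one, sub_self]
      · rw [hP'coeff, coeff_eq_zero_of_natDegree_lt (hdeg.trans_lt hi),
          coeff_eq_zero_of_natDegree_lt ((natDegree_X_sq_add_one_pow_le _).trans_lt hi),
          mul_zero, sub_zero]
    obtain ⟨Q, hQ⟩ : X ∣ P' := by
      rw [X_dvd_iff, hP'coeff, reflect_eq_self_iff.mp hpal 0 (Nat.zero_le _), Nat.sub_zero,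
        coeff_X_sq_add_one_pow]
      simp [c]
    have hQdeg : Q.natDegree ≤ 2 * m := by
      refine natDegree_le_iff_coeff_eq_zero.mpr fun i hi => ?_
      rw [← coeff_X_mul, ← hQ]
      exact coeff_eq_zero_of_natDegree_lt (by omega)
    have hQpal : reflect (2 * m) Q = Q := by
      refine isRegular_X.left ?_
      calc X * reflect (2 * m) Q = reflect (2 + 2 * m) (X * Q) := by
            rw [reflect_mul _ _ (natDegree_X_le.trans one_le_two) hQdeg, reflect_two_X]
        _ = X * Q := by rw [← hQ, show 2 + 2 * m = 2 * (m + 1) by ring, hP'pal]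
    obtain ⟨r, hr, rfl⟩ := ih hQdeg hQpal
    refine ⟨r + C c * X ^ (m + 1), ?_, ?_⟩
    · exact natDegree_add_le_of_degree_le (hr.trans m.le_succ) (natDegree_C_mul_X_pow_le _ _)
    · have hlow : ∀ j ≤ m, (r + C c * X ^ (m + 1)).coeff j = r.coeff j := fun j hj => by
        simp [coeff_X_pow, show j ≠ m + 1 by omega]
      have htop : (r + C c * X ^ (m + 1)).coeff (m + 1) = c := by
        simp [coeff_eq_zero_of_natDegree_lt (Nat.lt_succ_of_le hr)]
      rw [symOfDeg_succ, symOfDeg_congr hlow, htop, ← hQ, hP', sub_add_cancel]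

theorem aeval_symOfDeg {K : Type*} [Field K] [Algebra R K] {m : ℕ} {r : R[X]}
    (hr : r.natDegree ≤ m) {z : K} (hz : z ≠ 0) :
    aeval z (symOfDeg m r) = z ^ m * aeval (z + z⁻¹) r := by
  rw [aeval_eq_sum_range' (Nat.lt_succ_of_le hr), symOfDeg, map_sum, Finset.mul_sum]
  refine Finset.sum_congr rfl fun j hj => ?_
  have hzw : z * (z + z⁻¹) = z ^ 2 + 1 := by field_simp
  rw [← pow_sub_mul_pow z (Nat.lt_succ_iff.mp (Finset.mem_range.mp hj))]
  simp only [map_mul, map_pow, map_add, aeval_X, aeval_C, map_one, ← hzw, mul_pow,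
    Algebra.smul_def]
  ring

theorem symOfDeg_natDegree_ne_comp_X_pow {r : R[X]} (hr : r.nextCoeff ≠ 0) {k : ℕ} (hk : 1 < k)
    (s : R[X]) : symOfDeg r.natDegree r ≠ s.comp (X ^ k) := by
  have hpos := natDegree_pos_of_nextCoeff_ne_zero hr
  obtain ⟨m, hm⟩ := Nat.exists_eq_add_of_le' hpos
  intro h
  have hdvd : ∀ n, (symOfDeg r.natDegree r).coeff n ≠ 0 → k ∣ n := fun n hn => by
    by_contra hkn
    rw [h, ← expand_eq_comp_X_pow, coeff_expand (by omega), if_neg hkn] at hn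
    exact hn rfl
  have htop : k ∣ 2 * m + 1 + 1 := hdvd _ <| by
    rw [show 2 * m + 1 + 1 = 2 * r.natDegree by omega, coeff_symOfDeg_two_mul]
    exact leadingCoeff_ne_zero.mpr (ne_zero_of_natDegree_gt hpos)
  have hnext : k ∣ 2 * m + 1 := hdvd _ <| by
    rw [nextCoeff_of_natDegree_pos hpos, hm, Nat.add_sub_cancel] at hr
    rwa [hm, coeff_symOfDeg_two_mul_add_one]
  have := Nat.le_of_dvd one_pos ((Nat.dvd_add_right hnext).mp htop)
  omega

end Polynomial

theorem exists_ne_zero_add_inv_eq {K : Type*} [Field K] [IsAlgClosed K] (w : K) :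
    ∃ z ≠ 0, z + z⁻¹ = w := by
  obtain ⟨z, hz⟩ := IsAlgClosed.exists_root (C 1 * X ^ 2 + C (-w) * X + C 1)
    (by rw [degree_quadratic one_ne_zero]; exact two_ne_zero)
  have hquad : z ^ 2 + 1 = w * z := by
    simp only [IsRoot, eval_add, eval_mul, eval_C, eval_pow, eval_X] at hz
    linear_combination hz
  have hz0 : z ≠ 0 := by rintro rfl; simp at hquad
  exact ⟨z, hz0, by field_simp; linear_combination hquad⟩

theorem Polynomial.eq_of_forall_aeval_complex_eq {f g : ℤ[X]}
    (h : ∀ z : ℂ, z ≠ 0 → aeval z f = aeval z g) : f = g := by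
  refine map_injective (algebraMap ℤ ℂ) (algebraMap ℤ ℂ).injective_int
    (eq_of_infinite_eval_eq _ _ ?_)
  refine Set.Infinite.mono (fun z hz => ?_) (Set.finite_singleton 0).infinite_compl
  simpa only [Set.mem_ofPred_eq, eval_map_algebraMap] using h z hz

theorem symPoly_eq_symOfDeg (q : ℤ[X]) : symPoly q = symOfDeg q.natDegree q := rfl

theorem natDegree_symPoly (q : ℤ[X]) : (symPoly q).natDegree = 2 * q.natDegree := by
  rcases eq_or_ne q 0 with rfl | hq
  · simp [symPoly]
  · refine natDegree_eq_of_le_of_coeff_ne_zero (natDegree_symOfDeg_le _ _) ?_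
    rw [symPoly_eq_symOfDeg, coeff_symOfDeg_two_mul]
    exact leadingCoeff_ne_zero.mpr hq

theorem leadingCoeff_symPoly (q : ℤ[X]) : (symPoly q).leadingCoeff = q.leadingCoeff := by
  rw [leadingCoeff, natDegree_symPoly, symPoly_eq_symOfDeg, coeff_symOfDeg_two_mul, leadingCoeff]

theorem aeval_symPoly (q : ℤ[X]) {z : ℂ} (hz : z ≠ 0) :
    aeval z (symPoly q) = z ^ q.natDegree * aeval (z + z⁻¹) q :=
  aeval_symOfDeg le_rfl hz

theorem symPoly_mul (r s : ℤ[X]) : symPoly (r * s) = symPoly r * symPoly s := by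
  rcases eq_or_ne r 0 with rfl | hr
  · simp [symPoly]
  rcases eq_or_ne s 0 with rfl | hs
  · simp [symPoly]
  refine eq_of_forall_aeval_complex_eq fun z hz => ?_
  rw [map_mul, aeval_symPoly _ hz, aeval_symPoly _ hz, aeval_symPoly _ hz, natDegree_mul hr hs,
    map_mul]
  ring

theorem symPoly_injective : Function.Injective symPoly := by
  intro r s h
  have hdeg : r.natDegree = s.natDegree := by
    have := congrArg natDegree h
    rw [natDegree_symPoly, natDegree_symPoly] at this
    omega
  refine eq_of_forall_aeval_complex_eq fun w _ => ?_
  obtain ⟨z, hz, rfl⟩ := exists_ne_zero_add_inv_eq w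
  have := congrArg (aeval z) h
  rw [aeval_symPoly _ hz, aeval_symPoly _ hz, hdeg] at this
  exact mul_left_cancel₀ (pow_ne_zero _ hz) this

theorem isSymplecticPoly_symPoly {q : ℤ[X]} (hq : q.Monic) (hpos : 0 < q.natDegree) :
    IsSymplecticPoly (symPoly q) := by
  refine ⟨?_, ⟨q.natDegree, hpos, natDegree_symPoly q⟩, ?_⟩
  · rw [Monic, leadingCoeff_symPoly]
    exact hq
  · rw [natDegree_symPoly, ← reflect_eq_self_iff]
    exact reflect_symOfDeg _ _

theorem IsSymplecticPoly.exists_eq_symPoly {P : ℤ[X]} (hP : IsSymplecticPoly P) :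
    ∃ r : ℤ[X], 0 < r.natDegree ∧ P = symPoly r := by
  obtain ⟨hmonic, ⟨n, hn, hdeg⟩, hpal⟩ := hP
  obtain ⟨r, hr, rfl⟩ := exists_symOfDeg_eq hdeg.le (reflect_eq_self_iff.mpr (hdeg ▸ hpal))
  have hrn : r.coeff n = 1 := by rw [← coeff_symOfDeg_two_mul, ← hdeg]; exact hmonic
  have hrdeg : r.natDegree = n :=
    natDegree_eq_of_le_of_coeff_ne_zero hr (by rw [hrn]; exact one_ne_zero)
  exact ⟨r, hrdeg ▸ hn, by rw [symPoly_eq_symOfDeg, hrdeg]⟩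

theorem symplecticallyIrreducible_symPoly {q : ℤ[X]} (hq : q.Monic) (hirr : Irreducible q) :
    SymplecticallyIrreducible (symPoly q) := by
  refine ⟨isSymplecticPoly_symPoly hq (hq.natDegree_pos.mpr ?_), ?_⟩
  · rintro rfl
    exact hirr.not_isUnit isUnit_one
  rintro ⟨_, _, h₁, h₂, h⟩
  obtain ⟨r₁, hr₁, rfl⟩ := h₁.exists_eq_symPoly
  obtain ⟨r₂, hr₂, rfl⟩ := h₂.exists_eq_symPoly
  rw [← symPoly_mul] at h
  rcases hirr.isUnit_or_isUnit (symPoly_injective h) with hu | hu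
  · exact hr₁.ne' (natDegree_eq_zero_of_isUnit hu)
  · exact hr₂.ne' (natDegree_eq_zero_of_isUnit hu)

theorem Polynomial.Monic.exists_isRoot_lt_norm {P : ℂ[X]} (hP : P.Monic) {c : ℝ}
    (h : c * P.natDegree < ‖P.nextCoeff‖) : ∃ β, P.IsRoot β ∧ c < ‖β‖ := by
  have hsplit : P.Splits := IsAlgClosed.splits P
  by_contra! hle
  have hroots : ∀ x ∈ P.roots.map norm, x ≤ c := by
    simp only [Multiset.mem_map, forall_exists_index, and_imp, forall_apply_eq_imp_iff₂]
    exact fun β hβ => hle β ((mem_roots hP.ne_zero).mp hβ)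
  have : ‖P.nextCoeff‖ ≤ c * P.natDegree := calc
    ‖P.nextCoeff‖ = ‖P.roots.sum‖ := by
      rw [hsplit.nextCoeff_eq_neg_sum_roots_of_monic hP, norm_neg]
    _ ≤ (P.roots.map norm).sum := norm_multiset_sum_le _
    _ ≤ (P.roots.map norm).card • c := Multiset.sum_le_card_nsmul _ _ hroots
    _ = c * P.natDegree := by
      rw [Multiset.card_map, splits_iff_card_roots.mp hsplit, nsmul_eq_mul, mul_comm]
  linarith

theorem Polynomial.Monic.exists_aeval_eq_zero_lt_norm {q : ℤ[X]} (hq : q.Monic) {c : ℤ}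
    (h : c * q.natDegree < |q.nextCoeff|) : ∃ β : ℂ, aeval β q = 0 ∧ c < ‖β‖ := by
  obtain ⟨β, hβ, hβc⟩ := (hq.map (algebraMap ℤ ℂ)).exists_isRoot_lt_norm (c := c) (by
    rw [nextCoeff_map (algebraMap ℤ ℂ).injective_int, hq.natDegree_map, algebraMap_int_eq,
      eq_intCast, Complex.norm_intCast]
    exact_mod_cast h)
  exact ⟨β, by rwa [IsRoot, eval_map_algebraMap] at hβ, hβc⟩

theorem exists_root_symPoly_not_rootOfUnity {q : ℤ[X]} {β : ℂ} (hβ : aeval β q = 0)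
    (hβ2 : 2 < ‖β‖) : ∃ ζ : ℂ, aeval ζ (symPoly q) = 0 ∧ ¬ ∃ n : ℕ, 1 ≤ n ∧ ζ ^ n = 1 := by
  obtain ⟨z, hz, rfl⟩ := exists_ne_zero_add_inv_eq β
  refine ⟨z, by rw [aeval_symPoly _ hz, hβ, mul_zero], ?_⟩
  rintro ⟨n, hn, hzn⟩
  have hz1 : ‖z‖ = 1 := Complex.norm_eq_one_of_pow_eq_one hzn (by omega)
  have : ‖z + z⁻¹‖ ≤ 2 := (norm_add_le _ _).trans (by rw [norm_inv, hz1]; norm_num)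
  linarith

namespace Polynomial

section XPowAddSum

variable {R : Type*} [Semiring R] (b : ℕ → R) (g : ℕ)

theorem degree_sum_range_C_mul_X_pow_lt :
    (∑ i ∈ Finset.range g, C (b i) * X ^ i).degree < (g : WithBot ℕ) := by
  simp_rw [← Fin.sum_univ_eq_sum_range fun i => C (b i) * X ^ i]
  exact degree_sum_fin_lt _

theorem monic_X_pow_add_sum_range_C_mul_X_pow :
    (X ^ g + ∑ i ∈ Finset.range g, C (b i) * X ^ i).Monic :=
  monic_X_pow_add (degree_sum_range_C_mul_X_pow_lt b g)

theorem natDegree_X_pow_add_sum_range_C_mul_X_pow [Nontrivial R] :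
    (X ^ g + ∑ i ∈ Finset.range g, C (b i) * X ^ i).natDegree = g := by
  rw [natDegree_add_eq_left_of_degree_lt
    (by rw [degree_X_pow]; exact degree_sum_range_C_mul_X_pow_lt b g), natDegree_X_pow]

theorem coeff_X_pow_add_sum_range_C_mul_X_pow {i : ℕ} (hi : i < g) :
    (X ^ g + ∑ j ∈ Finset.range g, C (b j) * X ^ j).coeff i = b i := by
  rw [coeff_add, coeff_X_pow, if_neg hi.ne, zero_add, finsetSum_coeff]
  simp only [coeff_C_mul_X_pow]
  rw [Finset.sum_ite_eq, if_pos (Finset.mem_range.mpr hi)]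

end XPowAddSum

theorem Monic.irreducible_of_prime_dvd_coeff {A : Type*} [CommRing A] [IsDomain A] {π : A}
    (hπ : Prime π) {f : A[X]} (hf : f.Monic) (hdeg : 0 < f.natDegree)
    (hdvd : ∀ n < f.natDegree, π ∣ f.coeff n) (h0 : ¬ π ^ 2 ∣ f.coeff 0) : Irreducible f := by
  have hprime : (Ideal.span {π}).IsPrime := (Ideal.span_singleton_prime hπ.ne_zero).mpr hπ
  refine IsEisensteinAt.irreducible ?_ hprime hf.isPrimitive hdeg
  refine hf.isEisensteinAt_of_mem_of_notMem hprime.ne_top (fun hn => ?_) ?_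
  · exact Ideal.mem_span_singleton.mpr (hdvd _ hn)
  · rwa [Ideal.span_singleton_pow, Ideal.mem_span_singleton]

end Polynomial

theorem eisenstein_sym_satisfies_homological_criterion (p : ℕ) (hp : p.Prime)
    (g : ℕ) (hg : 1 ≤ g) (a : ℕ → ℤ) (ha0 : ¬ (p : ℤ) ∣ a 0)
    (hbig : (2 * g : ℤ) < |a (g - 1) * (p : ℤ)|)
    (q : Polynomial ℤ)
    (hq : q = Polynomial.X ^ g +
      ∑ i ∈ Finset.range g, Polynomial.C (a i * (p : ℤ)) * Polynomial.X ^ i) :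
    SymplecticallyIrreducible (symPoly q) ∧
      (∃ ζ : ℂ, Polynomial.aeval ζ (symPoly q) = 0 ∧ ¬ ∃ n : ℕ, 1 ≤ n ∧ ζ ^ n = 1) ∧
      ¬ ∃ k : ℕ, 1 < k ∧ ∃ r : Polynomial ℤ, symPoly q = r.comp (Polynomial.X ^ k) := by
  have hmonic : q.Monic := hq ▸ monic_X_pow_add_sum_range_C_mul_X_pow _ g
  have hdeg : q.natDegree = g := hq ▸ natDegree_X_pow_add_sum_range_C_mul_X_pow _ g
  have hcoeff : ∀ i < g, q.coeff i = a i * p := fun i hi =>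
    hq ▸ coeff_X_pow_add_sum_range_C_mul_X_pow (fun i => a i * p) g hi
  have hnext : q.nextCoeff = a (g - 1) * p := by
    rw [nextCoeff_of_natDegree_pos (hdeg ▸ hg), hdeg, hcoeff _ (by omega)]
  rw [← hnext, ← hdeg] at hbig
  have hpZ : Prime (p : ℤ) := Nat.prime_iff_prime_int.mp hp
  have hirr : Irreducible q := by
    refine hmonic.irreducible_of_prime_dvd_coeff hpZ (by omega) (fun n hn => ?_) ?_
    · rw [hcoeff n (hdeg ▸ hn)]
      exact dvd_mul_left _ _
    · rw [hcoeff 0 (by omega), pow_two]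
      exact fun h => ha0 ((mul_dvd_mul_iff_right hpZ.ne_zero).mp h)
  refine ⟨symplecticallyIrreducible_symPoly hmonic hirr, ?_, ?_⟩
  · obtain ⟨β, hβ, hβ2⟩ := hmonic.exists_aeval_eq_zero_lt_norm hbig
    exact exists_root_symPoly_not_rootOfUnity hβ (by exact_mod_cast hβ2)
  · rintro ⟨k, hk, r, h⟩
    exact symOfDeg_natDegree_ne_comp_X_pow (abs_pos.mp (lt_of_le_of_lt (by positivity) hbig)) hk r h
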